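/- arXiv:2307.04527 — 2 statements merged into one kernel-verified Lean document; each statement's English description precedes it below -/
import Mathlib

section
/- Let (Ω, μ) be a probability space and let α₀, α, γ, γ₀ : Ω → ℝ be square-integrable functions. Suppose m is a linear functional on L² with the representation property E[m(Δ)] = E[α₀·Δ] for all square-integrable Δ, and suppose E[Y|X] = γ₀ in the sense that E[α·(Y−γ₀)] = 0 for all square-integrable α. Then E[m(γ)] − E[m(γ₀)] + E[α·(Y−γ)] = −E[(α−α₀)·(γ−γ₀)]. -/
open MeasureTheory

/-! Pointwise, `α₀ (γ - γ₀) + α (Y - γ) = α (Y - γ₀) - (α - α₀) (γ - γ₀)`. Every product here is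
one of two `L²` functions, hence integrable, so integrating gives the identity once the
orthogonality hypothesis kills `E[α (Y - γ₀)]`. -/

theorem debiasing_identity_general
    {Ω : Type*} [MeasurableSpace Ω] (μ : Measure Ω)
    (Y α₀ α γ γ₀ : Ω → ℝ)
    (hY : MemLp Y 2 μ) (hα₀ : MemLp α₀ 2 μ) (hα : MemLp α 2 μ)
    (hγ : MemLp γ 2 μ) (hγ₀ : MemLp γ₀ 2 μ)
    (hce : ∀ a : Ω → ℝ, MemLp a 2 μ → ∫ ω, a ω * (Y ω - γ₀ ω) ∂μ = 0) :
    (∫ ω, α₀ ω * γ ω ∂μ) - (∫ ω, α₀ ω * γ₀ ω ∂μ) + (∫ ω, α ω * (Y ω - γ ω) ∂μ)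
      = - ∫ ω, (α ω - α₀ ω) * (γ ω - γ₀ ω) ∂μ := by
  have hmul {f g : Ω → ℝ} (hf : MemLp f 2 μ) (hg : MemLp g 2 μ) :
      Integrable (fun ω => f ω * g ω) μ :=
    hf.integrable_mul hg
  calc (∫ ω, α₀ ω * γ ω ∂μ) - (∫ ω, α₀ ω * γ₀ ω ∂μ) + (∫ ω, α ω * (Y ω - γ ω) ∂μ)
      = (∫ ω, α₀ ω * (γ ω - γ₀ ω) ∂μ) + ∫ ω, α ω * (Y ω - γ ω) ∂μ := by
        rw [← integral_sub (hmul hα₀ hγ) (hmul hα₀ hγ₀)]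
        simp only [mul_sub]
    _ = ∫ ω, (α₀ ω * (γ ω - γ₀ ω) + α ω * (Y ω - γ ω)) ∂μ :=
        (integral_add (hmul hα₀ (hγ.sub hγ₀)) (hmul hα (hY.sub hγ))).symm
    _ = ∫ ω, (α ω * (Y ω - γ₀ ω) - (α ω - α₀ ω) * (γ ω - γ₀ ω)) ∂μ := by
        congr 1
        ext ω
        ring
    _ = (∫ ω, α ω * (Y ω - γ₀ ω) ∂μ) - ∫ ω, (α ω - α₀ ω) * (γ ω - γ₀ ω) ∂μ :=
        integral_sub (hmul hα (hY.sub hγ₀)) (hmul (hα.sub hα₀) (hγ.sub hγ₀))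
    _ = - ∫ ω, (α ω - α₀ ω) * (γ ω - γ₀ ω) ∂μ := by
        rw [hce α hα, zero_sub]

/-- The key debiasing identity: for a linear functional `m` represented by its Riesz
representer `α₀` (so `E[m(γ)] = E[α₀ γ]`) and `γ₀` the conditional expectation of `Y`
given `X` (expressed as orthogonality of `Y - γ₀` to all square-integrable functions),
`E[m(γ)] - E[m(γ₀)] + E[α (Y - γ)] = -E[(α - α₀)(γ - γ₀)]`. -/
theorem debiasing_identity
    {Ω : Type*} [MeasurableSpace Ω] (μ : Measure Ω) [IsProbabilityMeasure μ]
    (Y α₀ α γ γ₀ : Ω → ℝ)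
    (hY : MemLp Y 2 μ) (hα₀ : MemLp α₀ 2 μ) (hα : MemLp α 2 μ)
    (hγ : MemLp γ 2 μ) (hγ₀ : MemLp γ₀ 2 μ)
    (hce : ∀ a : Ω → ℝ, MemLp a 2 μ → ∫ ω, a ω * (Y ω - γ₀ ω) ∂μ = 0) :
    (∫ ω, α₀ ω * γ ω ∂μ) - (∫ ω, α₀ ω * γ₀ ω ∂μ) + (∫ ω, α ω * (Y ω - γ ω) ∂μ)
      = - ∫ ω, (α ω - α₀ ω) * (γ ω - γ₀ ω) ∂μ :=
  debiasing_identity_general μ Y α₀ α γ γ₀ hY hα₀ hα hγ hγ₀ hce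
end

section
/- Under the setup of the debiasing identity (linear functional m with Riesz representer α₀ and γ₀ the conditional expectation of Y given X): if α = α₀, then E[m(γ)] − θ₀ + E[α₀·(Y−γ)] = 0 for every square-integrable γ, where θ₀ = E[m(γ₀)]. -/
open MeasureTheory

theorem integral_mul_sub_of_memLp_two {Ω : Type*} [MeasurableSpace Ω] {μ : Measure Ω}
    {a f g : Ω → ℝ}
    (ha : MemLp a 2 μ) (hf : MemLp f 2 μ) (hg : MemLp g 2 μ) :
    ∫ ω, a ω * (f ω - g ω) ∂μ = (∫ ω, a ω * f ω ∂μ) - ∫ ω, a ω * g ω ∂μ := by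
  simp only [mul_sub]
  exact integral_sub (ha.integrable_mul hf) (ha.integrable_mul hg)

theorem double_robustness_alpha_general
    {Ω : Type*} [MeasurableSpace Ω] (μ : Measure Ω)
    (Y α₀ γ₀ : Ω → ℝ)
    (hY : MemLp Y 2 μ) (hα₀ : MemLp α₀ 2 μ) (hγ₀ : MemLp γ₀ 2 μ)
    (hce : ∀ a : Ω → ℝ, MemLp a 2 μ → ∫ ω, a ω * (Y ω - γ₀ ω) ∂μ = 0)
    (θ₀ : ℝ) (hθ₀ : θ₀ = ∫ ω, α₀ ω * γ₀ ω ∂μ) :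
    ∀ γ : Ω → ℝ, MemLp γ 2 μ →
      (∫ ω, α₀ ω * γ ω ∂μ) - θ₀ + (∫ ω, α₀ ω * (Y ω - γ ω) ∂μ) = 0 := by
  intro γ hγ
  have hα₀_orth := hce α₀ hα₀
  rw [integral_mul_sub_of_memLp_two hα₀ hY hγ₀] at hα₀_orth
  rw [hθ₀, integral_mul_sub_of_memLp_two hα₀ hY hγ]
  linarith

/-- Double robustness, first half: if `α = α₀` (the Riesz representer of `m`, so
`E[m(γ)] = E[α₀ γ]`) then `E[m(γ)] - θ₀ + E[α₀ (Y - γ)] = 0` for every square-integrable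
`γ`, where `θ₀ = E[m(γ₀)]` and `γ₀` is the conditional expectation of `Y` given `X`. -/
theorem double_robustness_alpha
    {Ω : Type*} [MeasurableSpace Ω] (μ : Measure Ω) [IsProbabilityMeasure μ]
    (Y α₀ γ₀ : Ω → ℝ)
    (hY : MemLp Y 2 μ) (hα₀ : MemLp α₀ 2 μ) (hγ₀ : MemLp γ₀ 2 μ)
    (hce : ∀ a : Ω → ℝ, MemLp a 2 μ → ∫ ω, a ω * (Y ω - γ₀ ω) ∂μ = 0)
    (θ₀ : ℝ) (hθ₀ : θ₀ = ∫ ω, α₀ ω * γ₀ ω ∂μ) :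
    ∀ γ : Ω → ℝ, MemLp γ 2 μ →
      (∫ ω, α₀ ω * γ ω ∂μ) - θ₀ + (∫ ω, α₀ ω * (Y ω - γ ω) ∂μ) = 0 :=
  double_robustness_alpha_general μ Y α₀ γ₀ hY hα₀ hγ₀ hce θ₀ hθ₀
end
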